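/- If μ : [0,T) → V_n is a solution of the bracket flow μ' = δ_μ(Ric_μ) with μ(0) = μ₀, then ‖μ(t)‖² ≤ 1/(t/(2n) + 1/‖μ₀‖²) ≤ 2n/t for all t ∈ (0,T). In particular any solution remains bounded and ‖μ(t)‖ → 0 as t → ∞ when T = ∞. -/

import Mathlib

/-!
Along the bracket flow, `F(t) = ‖μ(t)‖²` satisfies `F' = 2⟨δ_μ(Ric_μ), μ⟩ = -8 tr(Ric_μ²)`, while
`tr Ric_μ = -F/4`. Cauchy–Schwarz `(tr Ric_μ)² ≤ n tr(Ric_μ²)` turns this into the Riccati inequality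
`F' ≤ -F²/(2n)`. So `F` is nonincreasing, hence positive on `[0, t]` as soon as `F(t) > 0`, and then
`1/F(s) - s/(2n)` is nondecreasing on `[0, t]`, which is the bound.
-/

open Matrix BigOperators

noncomputable section

/-- An element of `V_n`: a skew-symmetric bilinear map `μ : ℝⁿ × ℝⁿ → ℝⁿ`. -/
def IsSkewBil {n : ℕ} (μ : (Fin n → ℝ) → (Fin n → ℝ) → (Fin n → ℝ)) : Prop :=
  (∀ x, IsLinearMap ℝ (μ x)) ∧ (∀ y, IsLinearMap ℝ (fun x => μ x y)) ∧
  (∀ x y, μ x y = - μ y x)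

/-- The matrix of `ad_μ x : y ↦ μ(x,y)` in the canonical basis. -/
def adMat {n : ℕ} (μ : (Fin n → ℝ) → (Fin n → ℝ) → (Fin n → ℝ)) (x : Fin n → ℝ) :
    Matrix (Fin n) (Fin n) ℝ := fun i j => μ x (Pi.single j 1) i

/-- The Ricci operator `Ric_μ = -½ Σᵢ (ad_μ eᵢ)ᵀ(ad_μ eᵢ) + ¼ Σᵢ (ad_μ eᵢ)(ad_μ eᵢ)ᵀ`. -/
def Ric {n : ℕ} (μ : (Fin n → ℝ) → (Fin n → ℝ) → (Fin n → ℝ)) :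
    Matrix (Fin n) (Fin n) ℝ :=
  (-(1/2 : ℝ)) • ∑ i, (adMat μ (Pi.single i 1))ᵀ * adMat μ (Pi.single i 1)
  + (1/4 : ℝ) • ∑ i, adMat μ (Pi.single i 1) * (adMat μ (Pi.single i 1))ᵀ

/-- `δ_μ(α)(x,y) = μ(αx,y) + μ(x,αy) - αμ(x,y)`. -/
def deltaMap {n : ℕ} (μ : (Fin n → ℝ) → (Fin n → ℝ) → (Fin n → ℝ))
    (A : Matrix (Fin n) (Fin n) ℝ) : (Fin n → ℝ) → (Fin n → ℝ) → (Fin n → ℝ) :=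
  fun x y => μ (A.mulVec x) y + μ x (A.mulVec y) - A.mulVec (μ x y)

/-- The inner product `⟨μ,ν⟩ = Σ_{i,j} ⟨μ(eᵢ,eⱼ), ν(eᵢ,eⱼ)⟩` on `V_n`. -/
def innV {n : ℕ} (μ ν : (Fin n → ℝ) → (Fin n → ℝ) → (Fin n → ℝ)) : ℝ :=
  ∑ i, ∑ j, ∑ k,
    μ (Pi.single i 1) (Pi.single j 1) k * ν (Pi.single i 1) (Pi.single j 1) k

/-- `D` is a derivation of the algebra `(ℝⁿ, μ)`. -/
def IsDeriv {n : ℕ} (μ : (Fin n → ℝ) → (Fin n → ℝ) → (Fin n → ℝ))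
    (D : Matrix (Fin n) (Fin n) ℝ) : Prop :=
  ∀ x y, D.mulVec (μ x y) = μ (D.mulVec x) y + μ x (D.mulVec y)

/-- The Jacobi identity. -/
def IsJacobi {n : ℕ} (μ : (Fin n → ℝ) → (Fin n → ℝ) → (Fin n → ℝ)) : Prop :=
  ∀ x y z, μ x (μ y z) + μ y (μ z x) + μ z (μ x y) = 0

/-- `μ` is a nilpotent Lie bracket on `ℝⁿ`. -/
def IsNilBracket {n : ℕ} (μ : (Fin n → ℝ) → (Fin n → ℝ) → (Fin n → ℝ)) : Prop :=
  IsSkewBil μ ∧ IsJacobi μ ∧ ∀ x, IsNilpotent (adMat μ x)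

theorem sq_trace_le_card_mul_trace_mul_transpose {ι : Type*} [Fintype ι] (R : Matrix ι ι ℝ) :
    trace R ^ 2 ≤ Fintype.card ι * trace (R * Rᵀ) := by
  calc trace R ^ 2 ≤ Fintype.card ι * ∑ i, R i i ^ 2 := sq_sum_le_card_mul_sum_sq
    _ ≤ Fintype.card ι * ∑ i, ∑ j, R i j ^ 2 := by
      gcongr with i
      exact Finset.single_le_sum (f := fun j => R i j ^ 2) (fun _ _ => sq_nonneg _)
        (Finset.mem_univ i)
    _ = Fintype.card ι * trace (R * Rᵀ) := by simp [trace, mul_apply, sq]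

theorem le_one_div_of_hasDerivAt_le_neg_sq_div {F F' : ℝ → ℝ} {k t : ℝ} (hk : 0 < k)
    (ht : 0 ≤ t) (hF : ∀ s ∈ Set.Icc 0 t, HasDerivAt F (F' s) s)
    (hF' : ∀ s ∈ Set.Icc 0 t, F' s ≤ -F s ^ 2 / k)
    (hFt : 0 < F t) : F t ≤ 1 / (t / k + 1 / F 0) := by
  have hcont : ContinuousOn F (Set.Icc 0 t) := fun s hs => (hF s hs).continuousAt.continuousWithinAt
  have hanti : AntitoneOn F (Set.Icc 0 t) :=
    antitoneOn_of_hasDerivWithinAt_nonpos (convex_Icc 0 t) hcont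
      (fun s hs => (hF s (interior_subset hs)).hasDerivWithinAt)
      (fun s hs => (hF' s (interior_subset hs)).trans
        (by rw [neg_div]; exact neg_nonpos.2 (div_nonneg (sq_nonneg _) hk.le)))
  have hpos : ∀ s ∈ Set.Icc 0 t, 0 < F s := fun s hs =>
    hFt.trans_le (hanti hs ⟨ht, le_rfl⟩ hs.2)
  have hmono : MonotoneOn (fun s => (F s)⁻¹ - s / k) (Set.Icc 0 t) := by
    refine monotoneOn_of_hasDerivWithinAt_nonneg (f' := fun s => -F' s / F s ^ 2 - 1 / k)
      (convex_Icc 0 t) ?_ (fun s hs => ?_) (fun s hs => ?_)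
    · exact (hcont.inv₀ fun s hs => (hpos s hs).ne').sub (continuousOn_id.div_const k)
    · exact (((hF s (interior_subset hs)).inv (hpos s (interior_subset hs)).ne').sub
        ((hasDerivAt_id s).div_const k)).hasDerivWithinAt
    · have hs' := interior_subset hs
      rw [sub_nonneg, le_div_iff₀ (pow_pos (hpos s hs') 2), one_div_mul_eq_div]
      linarith [hF' s hs', neg_div k (F s ^ 2)]
  have hG := hmono ⟨le_rfl, ht⟩ ⟨ht, le_rfl⟩ ht
  rw [le_one_div hFt
    (add_pos_of_nonneg_of_pos (div_nonneg ht hk.le) (one_div_pos.2 (hpos 0 ⟨le_rfl, ht⟩)))]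
  simp only [zero_div, sub_zero] at hG
  rw [one_div, one_div]
  linarith

section VnAlgebra

variable {n : ℕ} {ν : (Fin n → ℝ) → (Fin n → ℝ) → (Fin n → ℝ)}

theorem adMat_mulVec {x : Fin n → ℝ} (h : IsLinearMap ℝ (ν x)) (y : Fin n → ℝ) :
    adMat ν x *ᵥ y = ν x y :=
  LinearMap.toMatrix'_mulVec (IsLinearMap.mk' _ h) y

theorem adMat_eq_sum_smul (h : ∀ y, IsLinearMap ℝ (fun x => ν x y)) (x : Fin n → ℝ) :
    adMat ν x = ∑ p, x p • adMat ν (Pi.single p 1) := by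
  ext k j
  have hflip := congrFun (adMat_mulVec (ν := fun y x => ν x y) (h (Pi.single j 1)) x) k
  simp only [mulVec, dotProduct, adMat] at hflip
  simp only [adMat, Matrix.sum_apply, Matrix.smul_apply, smul_eq_mul, ← hflip, mul_comm]

theorem adMat_deltaMap (h : ∀ x, IsLinearMap ℝ (ν x)) (A : Matrix (Fin n) (Fin n) ℝ)
    (x : Fin n → ℝ) :
    adMat (deltaMap ν A) x = adMat ν (A *ᵥ x) + adMat ν x * A - A * adMat ν x := by
  ext k j
  have hcol (M : Matrix (Fin n) (Fin n) ℝ) : M k j = (M *ᵥ Pi.single j 1) k := by simp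
  rw [Matrix.sub_apply, Matrix.add_apply, hcol (adMat ν x * A), hcol (A * adMat ν x),
    ← mulVec_mulVec, ← mulVec_mulVec, adMat_mulVec (h x), adMat_mulVec (h x)]
  rfl

theorem innV_eq_sum_trace (μ ν : (Fin n → ℝ) → (Fin n → ℝ) → (Fin n → ℝ)) :
    innV μ ν = ∑ i, trace ((adMat μ (Pi.single i 1))ᵀ * adMat ν (Pi.single i 1)) := by
  simp only [innV, trace, diag, mul_apply, transpose_apply, adMat]

theorem trace_transpose_adMat_mul_adMat (h : ∀ x y, ν x y = -ν y x) (p q : Fin n) :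
    trace ((adMat ν (Pi.single p 1))ᵀ * adMat ν (Pi.single q 1))
      = (∑ i, (adMat ν (Pi.single i 1))ᵀ * adMat ν (Pi.single i 1)) p q := by
  simp [trace, mul_apply, Matrix.sum_apply, adMat, h (Pi.single p 1), h (Pi.single q 1)]

theorem Ric_transpose (ν : (Fin n → ℝ) → (Fin n → ℝ) → (Fin n → ℝ)) :
    (Ric ν)ᵀ = Ric ν := by
  simp [Ric, transpose_sum]

theorem trace_Ric (ν : (Fin n → ℝ) → (Fin n → ℝ) → (Fin n → ℝ)) :
    trace (Ric ν) = -(1 / 4) * innV ν ν := by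
  simp only [Ric, innV_eq_sum_trace, trace_add, trace_smul, trace_sum, smul_eq_mul]
  simp only [trace_mul_comm (adMat ν _) (adMat ν _)ᵀ]
  ring

theorem innV_deltaMap (hν : IsSkewBil ν) (A : Matrix (Fin n) (Fin n) ℝ) :
    innV (deltaMap ν A) ν = -4 * trace (A * Ric ν) := by
  obtain ⟨hright, hleft, hskew⟩ := hν
  set ad := fun i : Fin n => adMat ν (Pi.single i 1)
  set U := ∑ i, (ad i)ᵀ * ad i
  set W := ∑ i, ad i * (ad i)ᵀ
  have hU₁ : ∑ i, trace ((adMat ν (A *ᵥ Pi.single i 1))ᵀ * ad i) = trace (Aᵀ * U) := by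
    calc ∑ i, trace ((adMat ν (A *ᵥ Pi.single i 1))ᵀ * ad i)
        = ∑ i, ∑ p, A p i * trace ((ad p)ᵀ * ad i) := by
          refine Finset.sum_congr rfl fun i _ => ?_
          rw [adMat_eq_sum_smul hleft (A *ᵥ _), transpose_sum, Finset.sum_mul, trace_sum]
          simp [ad]
      _ = ∑ i, ∑ p, A p i * U p i := by simp only [ad, U, trace_transpose_adMat_mul_adMat hskew]
      _ = trace (Aᵀ * U) := by simp [trace, mul_apply]
  have hU₂ : ∑ i, trace ((ad i * A)ᵀ * ad i) = trace (Aᵀ * U) := by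
    simp only [transpose_mul, Matrix.mul_assoc, ← trace_sum, ← Finset.mul_sum, U]
  have hW : ∑ i, trace ((A * ad i)ᵀ * ad i) = trace (Aᵀ * W) := by
    rw [Matrix.mul_sum, trace_sum]
    refine Finset.sum_congr rfl fun i _ => ?_
    rw [transpose_mul, trace_mul_cycle, trace_mul_comm]
  have hRic : Ric ν = (-(1 / 2) : ℝ) • U + (1 / 4 : ℝ) • W := rfl
  rw [innV_eq_sum_trace]
  simp only [adMat_deltaMap hright, transpose_sub, transpose_add, Matrix.sub_mul, Matrix.add_mul,
    trace_sub, trace_add, Finset.sum_sub_distrib, Finset.sum_add_distrib]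
  rw [hU₁, hU₂, hW, ← trace_transpose_mul A, Ric_transpose, hRic]
  simp only [Matrix.mul_add, Matrix.mul_smul, trace_add, trace_smul, smul_eq_mul]
  ring

theorem innV_self_nonneg (ν : (Fin n → ℝ) → (Fin n → ℝ) → (Fin n → ℝ)) :
    0 ≤ innV ν ν :=
  Finset.sum_nonneg fun _ _ => Finset.sum_nonneg fun _ _ =>
    Finset.sum_nonneg fun _ _ => mul_self_nonneg _

theorem two_mul_innV_deltaMap_Ric_le (hν : IsSkewBil ν) (hn : 0 < n) :
    2 * innV (deltaMap ν (Ric ν)) ν ≤ -innV ν ν ^ 2 / (2 * n) := by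
  have hCS := sq_trace_le_card_mul_trace_mul_transpose (Ric ν)
  rw [Fintype.card_fin, Ric_transpose, trace_Ric] at hCS
  rw [innV_deltaMap hν, le_div_iff₀ (by positivity)]
  nlinarith

theorem hasDerivAt_innV_self {μ : ℝ → (Fin n → ℝ) → (Fin n → ℝ) → (Fin n → ℝ)}
    {μ' : (Fin n → ℝ) → (Fin n → ℝ) → (Fin n → ℝ)} {t : ℝ}
    (h : ∀ x y, HasDerivAt (fun s => μ s x y) (μ' x y) t) :
    HasDerivAt (fun s => innV (μ s) (μ s)) (2 * innV μ' (μ t)) t := by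
  have hcoord (i j k : Fin n) :
      HasDerivAt (fun s => μ s (Pi.single i 1) (Pi.single j 1) k)
        (μ' (Pi.single i 1) (Pi.single j 1) k) t :=
    hasDerivAt_pi.mp (h _ _) k
  have hsum := HasDerivAt.fun_sum (u := Finset.univ) fun i _ =>
    HasDerivAt.fun_sum (u := Finset.univ) fun j _ =>
      HasDerivAt.fun_sum (u := Finset.univ) fun k _ => (hcoord i j k).mul (hcoord i j k)
  refine hsum.congr_deriv ?_
  simp only [innV, Finset.mul_sum]
  ring_nf

end VnAlgebra

theorem stmt15_general {n : ℕ} (T : ℝ)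
    (μ : ℝ → (Fin n → ℝ) → (Fin n → ℝ) → (Fin n → ℝ))
    (μ₀ : (Fin n → ℝ) → (Fin n → ℝ) → (Fin n → ℝ))
    (h0 : μ 0 = μ₀)
    (hsb : ∀ t ∈ Set.Ico (0 : ℝ) T, IsSkewBil (μ t))
    (hflow : ∀ t ∈ Set.Ico (0 : ℝ) T, ∀ x y : Fin n → ℝ,
      HasDerivAt (fun s => μ s x y) (deltaMap (μ t) (Ric (μ t)) x y) t) :
    ∀ t ∈ Set.Ioo (0 : ℝ) T,
      innV (μ t) (μ t) ≤ 1 / (t / (2 * n) + 1 / innV μ₀ μ₀) ∧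
      1 / (t / (2 * n) + 1 / innV μ₀ μ₀) ≤ 2 * n / t := by
  rintro t ⟨ht, htT⟩
  rcases Nat.eq_zero_or_pos n with rfl | hn
  · -- in dimension `0` every quantity is `0`, with `x / 0 = 0`
    simp [innV]
  refine ⟨?_, ?_⟩
  · rcases (innV_self_nonneg (μ t)).eq_or_lt with hzero | hpos
    · rw [← hzero]
      exact one_div_nonneg.2 (add_nonneg (by positivity) (one_div_nonneg.2 (innV_self_nonneg μ₀)))
    have hIcc : Set.Icc 0 t ⊆ Set.Ico 0 T := fun s hs => ⟨hs.1, hs.2.trans_lt htT⟩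
    simpa only [h0] using le_one_div_of_hasDerivAt_le_neg_sq_div (by positivity) ht.le
      (fun s hs => hasDerivAt_innV_self (hflow s (hIcc hs)))
      (fun s hs => two_mul_innV_deltaMap_Ric_le (hsb s (hIcc hs)) hn) hpos
  · calc 1 / (t / (2 * n) + 1 / innV μ₀ μ₀) ≤ 1 / (t / (2 * n)) :=
          one_div_le_one_div_of_le (by positivity)
            (le_add_of_nonneg_right (one_div_nonneg.2 (innV_self_nonneg μ₀)))
      _ = 2 * n / t := one_div_div _ _

/-- decay estimate `‖μ(t)‖² ≤ 1/(t/(2n) + 1/‖μ₀‖²) ≤ 2n/t`. -/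
theorem stmt15 {n : ℕ} (T : ℝ)
    (μ : ℝ → (Fin n → ℝ) → (Fin n → ℝ) → (Fin n → ℝ))
    (μ₀ : (Fin n → ℝ) → (Fin n → ℝ) → (Fin n → ℝ))
    (h0 : μ 0 = μ₀) (hne : μ₀ ≠ (fun _ _ => 0))
    (hsb : ∀ t ∈ Set.Ico (0 : ℝ) T, IsSkewBil (μ t))
    (hflow : ∀ t ∈ Set.Ico (0 : ℝ) T, ∀ x y : Fin n → ℝ,
      HasDerivAt (fun s => μ s x y) (deltaMap (μ t) (Ric (μ t)) x y) t) :
    ∀ t ∈ Set.Ioo (0 : ℝ) T,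
      innV (μ t) (μ t) ≤ 1 / (t / (2 * n) + 1 / innV μ₀ μ₀) ∧
      1 / (t / (2 * n) + 1 / innV μ₀ μ₀) ≤ 2 * n / t :=
  stmt15_general T μ μ₀ h0 hsb hflow
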